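/- arXiv:1802.08404 — 2 statements merged into one kernel-verified Lean document; each statement's English description precedes it below -/
import Mathlib

section
/- Let H be a reproducing kernel Hilbert space on a measurable space Θ with a bounded continuous kernel k, and let (P_N) be a sequence of Borel probability measures on Θ converging weakly to the Dirac measure δ_{θ∞} at a point θ∞ ∈ Θ. Then the kernel means μ_{P_N} = ∫ k(·,θ) dP_N(θ) converge in H-norm to k(·,θ∞), i.e., lim_{N→∞} ‖μ_{P_N} − k(·,θ∞)‖_H = 0. -/
open MeasureTheory Filter Topology
open scoped InnerProductSpace BigOperators

/-- Kernel means of weakly converging measures converge in RKHS norm to the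
feature vector at the limit point. The RKHS is modeled by a feature map
`φ : Θ → H` with kernel `k s t = ⟪φ s, φ t⟫`. -/
theorem stmt_0 {Θ : Type*} [TopologicalSpace Θ] [MeasurableSpace Θ] [BorelSpace Θ]
    {H : Type*} [NormedAddCommGroup H] [InnerProductSpace ℝ H] [CompleteSpace H]
    (φ : Θ → H)
    (hk_cont : Continuous fun p : Θ × Θ => ⟪φ p.1, φ p.2⟫_ℝ)
    (hk_bdd : ∃ C : ℝ, ∀ s t : Θ, |⟪φ s, φ t⟫_ℝ| ≤ C)
    (P : ℕ → Measure Θ) (hP : ∀ N, IsProbabilityMeasure (P N))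
    (hInt : ∀ N, Integrable φ (P N))
    (θlim : Θ)
    (hweak : ∀ f : BoundedContinuousFunction Θ ℝ,
      Tendsto (fun N => ∫ θ, f θ ∂(P N)) atTop (𝓝 (f θlim))) :
    Tendsto (fun N => ‖(∫ θ, φ θ ∂(P N)) - φ θlim‖) atTop (𝓝 0) := by
  obtain ⟨C, hC⟩ := hk_bdd
  -- norm bound on φ
  have hφnorm : ∀ s : Θ, ‖φ s‖ ≤ Real.sqrt C := by
    intro s
    have h1 : ‖φ s‖ ^ 2 = ⟪φ s, φ s⟫_ℝ := (real_inner_self_eq_norm_sq (φ s)).symm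
    have h2 : ⟪φ s, φ s⟫_ℝ ≤ C := le_trans (le_abs_self _) (hC s s)
    have : ‖φ s‖ ^ 2 ≤ C := h1 ▸ h2
    calc ‖φ s‖ = Real.sqrt (‖φ s‖ ^ 2) := (Real.sqrt_sq (norm_nonneg _)).symm
      _ ≤ Real.sqrt C := Real.sqrt_le_sqrt this
  -- the function s ↦ ‖φ s - φ θlim‖ is continuous
  have hg_cont : Continuous fun s : Θ => ‖φ s - φ θlim‖ := by
    have heq : (fun s : Θ => ‖φ s - φ θlim‖) =
        fun s : Θ => Real.sqrt (⟪φ s, φ s⟫_ℝ - 2 * ⟪φ s, φ θlim⟫_ℝ + ⟪φ θlim, φ θlim⟫_ℝ) := by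
      funext s
      have h1 : ‖φ s - φ θlim‖ ^ 2 = ‖φ s‖ ^ 2 - 2 * ⟪φ s, φ θlim⟫_ℝ + ‖φ θlim‖ ^ 2 :=
        norm_sub_sq_real (φ s) (φ θlim)
      rw [real_inner_self_eq_norm_sq, real_inner_self_eq_norm_sq, ← h1,
        Real.sqrt_sq (norm_nonneg _)]
    rw [heq]
    apply Real.continuous_sqrt.comp
    have c1 : Continuous fun s : Θ => ⟪φ s, φ s⟫_ℝ :=
      hk_cont.comp (continuous_id.prodMk continuous_id)
    have c2 : Continuous fun s : Θ => ⟪φ s, φ θlim⟫_ℝ :=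
      hk_cont.comp (continuous_id.prodMk continuous_const)
    exact (c1.sub (continuous_const.mul c2)).add continuous_const
  -- package it as a bounded continuous function
  let g : BoundedContinuousFunction Θ ℝ :=
    ⟨⟨fun s => ‖φ s - φ θlim‖, hg_cont⟩, by
      refine ⟨4 * Real.sqrt C, fun x y => ?_⟩
      have hx : ‖φ x - φ θlim‖ ≤ 2 * Real.sqrt C := by
        calc ‖φ x - φ θlim‖ ≤ ‖φ x‖ + ‖φ θlim‖ := norm_sub_le _ _
          _ ≤ Real.sqrt C + Real.sqrt C := add_le_add (hφnorm x) (hφnorm θlim)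
          _ = 2 * Real.sqrt C := by ring
      have hy : ‖φ y - φ θlim‖ ≤ 2 * Real.sqrt C := by
        calc ‖φ y - φ θlim‖ ≤ ‖φ y‖ + ‖φ θlim‖ := norm_sub_le _ _
          _ ≤ Real.sqrt C + Real.sqrt C := add_le_add (hφnorm y) (hφnorm θlim)
          _ = 2 * Real.sqrt C := by ring
      have h0x : (0:ℝ) ≤ ‖φ x - φ θlim‖ := norm_nonneg _
      have h0y : (0:ℝ) ≤ ‖φ y - φ θlim‖ := norm_nonneg _
      simp only [Real.dist_eq]
      rw [abs_le]
      constructor <;> nlinarith⟩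
  have hg0 : g θlim = 0 := by
    show ‖φ θlim - φ θlim‖ = 0
    simp
  have hgt : Tendsto (fun N => ∫ θ, g θ ∂(P N)) atTop (𝓝 0) := by
    have := hweak g
    rwa [hg0] at this
  -- squeeze
  have hbound : ∀ N, ‖(∫ θ, φ θ ∂(P N)) - φ θlim‖ ≤ ∫ θ, g θ ∂(P N) := by
    intro N
    haveI := hP N
    have hconst : (∫ _ : Θ, φ θlim ∂(P N)) = φ θlim := by
      simp [measure_univ]
    have hsub : (∫ θ, φ θ ∂(P N)) - φ θlim = ∫ θ, (φ θ - φ θlim) ∂(P N) := by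
      rw [integral_sub (hInt N) (integrable_const _), hconst]
    rw [hsub]
    calc ‖∫ θ, (φ θ - φ θlim) ∂(P N)‖ ≤ ∫ θ, ‖φ θ - φ θlim‖ ∂(P N) :=
          norm_integral_le_integral_norm _
      _ = ∫ θ, g θ ∂(P N) := rfl
  exact squeeze_zero (fun N => norm_nonneg _) hbound hgt
end

section
/- Let Θ ⊂ ℝ^d be compact, k: Θ×Θ → ℝ a continuous bounded kernel with RKHS H satisfying: (i) k(θ,θ) = C > 0 for all θ ∈ Θ, and (ii) k(θ,θ') < C whenever θ ≠ θ'. Let (P_N) be probability measures on Θ whose kernel means satisfy ‖μ_{P_N} − k(·,θ∞)‖_H → 0 for some θ∞ ∈ Θ. Then any sequence θ_N ∈ argmin_{θ̃∈Θ} ‖μ_{P_N} − k(·,θ̃)‖_H converges to θ∞ as N → ∞. -/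
open MeasureTheory Filter Topology
open scoped InnerProductSpace BigOperators

/-- Consistency of the herding point estimate: if the kernel means converge in
RKHS norm to `k(·,θ∞)`, then minimizers of `θ̃ ↦ ‖μ_N − k(·,θ̃)‖` over the
compact set `S ⊂ ℝ^d` converge to `θ∞`. -/
theorem stmt_4 {d : ℕ}
    {H : Type*} [NormedAddCommGroup H] [InnerProductSpace ℝ H]
    (S : Set (EuclideanSpace ℝ (Fin d))) (hS : IsCompact S)
    (φ : EuclideanSpace ℝ (Fin d) → H)
    (hk_cont : ContinuousOn
      (fun p : EuclideanSpace ℝ (Fin d) × EuclideanSpace ℝ (Fin d) =>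
        ⟪φ p.1, φ p.2⟫_ℝ) (S ×ˢ S))
    (hk_bdd : ∃ M : ℝ, ∀ s ∈ S, ∀ t ∈ S, |⟪φ s, φ t⟫_ℝ| ≤ M)
    (C : ℝ) (hC : 0 < C)
    (hdiag : ∀ θ ∈ S, ⟪φ θ, φ θ⟫_ℝ = C)
    (hoff : ∀ θ ∈ S, ∀ θ' ∈ S, θ ≠ θ' → ⟪φ θ, φ θ'⟫_ℝ < C)
    (θlim : EuclideanSpace ℝ (Fin d)) (hθlim : θlim ∈ S)
    (μ : ℕ → H)
    (hμ : Tendsto (fun N => ‖μ N - φ θlim‖) atTop (𝓝 0))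
    (θseq : ℕ → EuclideanSpace ℝ (Fin d)) (hmem : ∀ N, θseq N ∈ S)
    (hmin : ∀ N, ∀ θ' ∈ S, ‖μ N - φ (θseq N)‖ ≤ ‖μ N - φ θ'‖) :
    Tendsto θseq atTop (𝓝 θlim) := by
  -- Step 1: ‖μ N - φ (θseq N)‖ → 0
  have h1 : Tendsto (fun N => ‖μ N - φ (θseq N)‖) atTop (𝓝 0) := by
    refine squeeze_zero (fun N => norm_nonneg _) (fun N => hmin N θlim hθlim) hμ
  -- Step 2: ‖φ (θseq N) - φ θlim‖ → 0
  have h2 : Tendsto (fun N => ‖φ (θseq N) - φ θlim‖) atTop (𝓝 0) := by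
    have hsum : Tendsto (fun N => ‖μ N - φ (θseq N)‖ + ‖μ N - φ θlim‖) atTop (𝓝 0) := by
      simpa using h1.add hμ
    refine squeeze_zero (fun N => norm_nonneg _) (fun N => ?_) hsum
    calc ‖φ (θseq N) - φ θlim‖ = ‖(φ (θseq N) - μ N) + (μ N - φ θlim)‖ := by abel_nf
      _ ≤ ‖φ (θseq N) - μ N‖ + ‖μ N - φ θlim‖ := norm_add_le _ _
      _ = ‖μ N - φ (θseq N)‖ + ‖μ N - φ θlim‖ := by rw [norm_sub_rev]
  -- Step 3: ⟪φ (θseq N), φ θlim⟫ → C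
  set g : EuclideanSpace ℝ (Fin d) → ℝ := fun θ => ⟪φ θ, φ θlim⟫_ℝ with hg_def
  have hginner : ∀ N, g (θseq N) = C - ‖φ (θseq N) - φ θlim‖ ^ 2 / 2 := by
    intro N
    have h := @norm_sub_sq_real H _ _ (φ (θseq N)) (φ θlim)
    have ha : ‖φ (θseq N)‖ ^ 2 = C := by
      rw [← real_inner_self_eq_norm_sq]; exact hdiag _ (hmem N)
    have hb : ‖φ θlim‖ ^ 2 = C := by
      rw [← real_inner_self_eq_norm_sq]; exact hdiag _ hθlim
    rw [ha, hb] at h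
    simp only [hg_def]
    linarith
  have h3 : Tendsto (fun N => g (θseq N)) atTop (𝓝 C) := by
    have : Tendsto (fun N => C - ‖φ (θseq N) - φ θlim‖ ^ 2 / 2) atTop (𝓝 (C - 0 ^ 2 / 2)) := by
      exact (tendsto_const_nhds.sub (((h2.pow 2)).div_const 2))
    simp only [hginner]
    simpa using this
  -- continuity of g on S
  have hgcont : ContinuousOn g S := by
    have : ContinuousOn (fun θ : EuclideanSpace ℝ (Fin d) => (θ, θlim)) S :=
      (continuous_id.prodMk continuous_const).continuousOn
    exact hk_cont.comp this (fun θ hθ => Set.mk_mem_prod hθ hθlim)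
  -- Step 4: metric convergence
  rw [Metric.tendsto_nhds]
  intro ε hε
  set K : Set (EuclideanSpace ℝ (Fin d)) := S ∩ {θ | ε ≤ dist θ θlim} with hK_def
  have hKclosed : IsClosed {θ : EuclideanSpace ℝ (Fin d) | ε ≤ dist θ θlim} :=
    isClosed_le continuous_const (continuous_id.dist continuous_const)
  have hKcomp : IsCompact K := hS.inter_right hKclosed
  rcases K.eq_empty_or_nonempty with hKe | hKne
  · filter_upwards with N
    by_contra hcon
    push_neg at hcon
    have : θseq N ∈ K := ⟨hmem N, hcon⟩
    rw [hKe] at this; exact this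
  · obtain ⟨θstar, hθstarK, hmax⟩ :=
      hKcomp.exists_isMaxOn hKne (hgcont.mono Set.inter_subset_left)
    have hθstarS : θstar ∈ S := hθstarK.1
    have hne : θstar ≠ θlim := by
      intro h
      have := hθstarK.2
      rw [h] at this
      simp only [Set.mem_setOf_eq, dist_self] at this
      linarith
    have hlt : g θstar < C := hoff _ hθstarS _ hθlim hne
    have hev : ∀ᶠ N in atTop, g θstar < g (θseq N) :=
      h3.eventually (eventually_gt_nhds hlt)
    filter_upwards [hev] with N hN
    by_contra hcon
    push_neg at hcon
    have hmemK : θseq N ∈ K := ⟨hmem N, hcon⟩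
    exact absurd (hmax hmemK) (not_le.mpr hN)
end
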